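/- Let i ∈ {1,2} and let g ∈ GL₃(L) satisfy g⁻¹ · b_i · σ(g) = b_i and v_L(det g) = 0. Then g lies in the standard Iwahori subgroup: the diagonal entries g₁₁, g₂₂, g₃₃ are units of 𝒪, the strictly upper-triangular entries g₁₂, g₁₃, g₂₃ lie in t𝒪, and the strictly lower-triangular entries g₂₁, g₃₁, g₃₂ lie in 𝒪. -/

import Mathlib

noncomputable section

open Matrix HahnSeries

/-- `k̄`: an algebraic closure of the field `𝔽_q` with `q = p ^ n` elements. -/
abbrev Kbar (p n : ℕ) [Fact p.Prime] : Type := AlgebraicClosure (GaloisField p n)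

/-- `L = k̄((t))`, the field of formal Laurent series over `k̄`. -/
abbrev Lser (p n : ℕ) [Fact p.Prime] : Type := LaurentSeries (Kbar p n)

/-- The Frobenius `x ↦ x ^ q` (with `q = p ^ n`) of `k̄` over `k = 𝔽_q`. -/
def frobKbar (p n : ℕ) [Fact p.Prime] : Kbar p n →+* Kbar p n :=
  iterateFrobenius (Kbar p n) p n

/-- `σ : L → L`, applying the Frobenius of `k̄/k` to each coefficient:
`∑ aₘ tᵐ ↦ ∑ aₘ^q tᵐ`. -/
def sigmaL (p n : ℕ) [Fact p.Prime] : Lser p n →+* Lser p n where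
  toFun x := x.map (frobKbar p n)
  map_zero' := HahnSeries.map_zero ((frobKbar p n) : ZeroHom (Kbar p n) (Kbar p n))
  map_one' := HahnSeries.map_one ((frobKbar p n).toMonoidWithZeroHom)
  map_add' x y := HahnSeries.map_add ((frobKbar p n) : (Kbar p n) →+ (Kbar p n))
  map_mul' x y := HahnSeries.map_mul ((frobKbar p n) : (Kbar p n) →ₙ+* (Kbar p n))

/-- `σ` extended entrywise to `GL₃(L)`. -/
def sigmaGL (p n : ℕ) [Fact p.Prime] :
    GL (Fin 3) (Lser p n) →* GL (Fin 3) (Lser p n) :=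
  Units.map ((sigmaL p n).mapMatrix.toMonoidHom)

/-- The element `t ∈ L`, as a unit of `L`. -/
def tUnit (p n : ℕ) [Fact p.Prime] : (Lser p n)ˣ :=
  Units.mk0 (HahnSeries.single (1 : ℤ) (1 : Kbar p n))
    (HahnSeries.single_ne_zero one_ne_zero)

/-- The valuation ring `𝒪 = k̄[[t]] ⊆ L`. -/
def Oring (p n : ℕ) [Fact p.Prime] : Subring (Lser p n) :=
  (HahnSeries.ofPowerSeries ℤ (Kbar p n)).range

/-- `K = GL₃(𝒪)`: the invertible matrices with entries in `𝒪` whose inverse also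
has entries in `𝒪`. -/
def Kgp (p n : ℕ) [Fact p.Prime] : Set (GL (Fin 3) (Lser p n)) :=
  {g | (∀ i j, (g : Matrix (Fin 3) (Fin 3) (Lser p n)) i j ∈ Oring p n) ∧
       (∀ i j, ((g⁻¹ : GL (Fin 3) (Lser p n)) : Matrix (Fin 3) (Fin 3) (Lser p n)) i j
          ∈ Oring p n)}

/-- `t^λ = diag(t^{m₁}, t^{m₂}, t^{m₃}) ∈ GL₃(L)` for `λ = (m₁, m₂, m₃) ∈ ℤ³`. -/
def tLam (p n : ℕ) [Fact p.Prime] (m : Fin 3 → ℤ) : GL (Fin 3) (Lser p n) where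
  val := Matrix.diagonal fun i => ((tUnit p n ^ m i : (Lser p n)ˣ) : Lser p n)
  inv := Matrix.diagonal fun i => ((tUnit p n ^ (-(m i)) : (Lser p n)ˣ) : Lser p n)
  val_inv := by
    rw [Matrix.diagonal_mul_diagonal]
    convert Matrix.diagonal_one using 2
    funext i
    rw [← Units.val_mul, ← _root_.zpow_add, add_neg_cancel, zpow_zero, Units.val_one]
  inv_val := by
    rw [Matrix.diagonal_mul_diagonal]
    convert Matrix.diagonal_one using 2
    funext i
    rw [← Units.val_mul, ← _root_.zpow_add, neg_add_cancel, zpow_zero, Units.val_one]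

/-- The valuation `v_L : L → ℤ` (the `t`-adic order). -/
def vL (p n : ℕ) [Fact p.Prime] (x : Lser p n) : ℤ := x.order

/-- `η = v_L ∘ det : GL₃(L) → ℤ`. -/
def eta (p n : ℕ) [Fact p.Prime] (g : GL (Fin 3) (Lser p n)) : ℤ :=
  vL p n ((g : Matrix (Fin 3) (Fin 3) (Lser p n)).det)

/-- Membership in the double coset `K t^λ K ⊆ GL₃(L)`. -/
def inKtK (p n : ℕ) [Fact p.Prime] (m : Fin 3 → ℤ) (g : GL (Fin 3) (Lser p n)) : Prop :=
  ∃ k₁ ∈ Kgp p n, ∃ k₂ ∈ Kgp p n, g = k₁ * tLam p n m * k₂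
/-- `b₁`, the superbasic element with Newton vector `(1/3, 1/3, 1/3)`. -/
def bOne (p n : ℕ) [Fact p.Prime] : GL (Fin 3) (Lser p n) :=
  Matrix.GeneralLinearGroup.mkOfDetNeZero
    !![0, 0, ((tUnit p n : (Lser p n)ˣ) : Lser p n); 1, 0, 0; 0, 1, 0]
    (by
      have ht : ((tUnit p n : (Lser p n)ˣ) : Lser p n) ≠ 0 := (tUnit p n).ne_zero
      simp [Matrix.det_fin_three, ht])

/-- `b₂`, the superbasic element with Newton vector `(2/3, 2/3, 2/3)`. -/
def bTwo (p n : ℕ) [Fact p.Prime] : GL (Fin 3) (Lser p n) :=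
  Matrix.GeneralLinearGroup.mkOfDetNeZero
    !![0, ((tUnit p n : (Lser p n)ˣ) : Lser p n), 0;
       0, 0, ((tUnit p n : (Lser p n)ˣ) : Lser p n); 1, 0, 0]
    (by
      have ht : ((tUnit p n : (Lser p n)ˣ) : Lser p n) ≠ 0 := (tUnit p n).ne_zero
      simp [Matrix.det_fin_three, ht])

/-!
Write `D, P, Q` for the valuations of `g₁₁, g₃₁, g₂₁`. Comparing entries in `b σ(g) = g b`, and
using that `σ` preserves valuations, every entry of `g` has valuation `D`, `P`, `P + 1`, `Q` or
`Q + 1`, constant along the cyclic diagonals. In the Leibniz expansion of `det g` the three cyclic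
terms then have valuations `3D`, `3P + 2`, `3Q + 1`, pairwise distinct modulo 3, while the other
three terms have their average `D + P + Q + 1`. So one cyclic term strictly dominates, and
`v(det g) = 0` is the minimum of `3D`, `3P + 2`, `3Q + 1`; this forces `D = 0` and `P, Q ≥ 0`.
-/

theorem HahnSeries.orderTop_map_of_injective {Γ R S F : Type*} [LinearOrder Γ] [Zero R] [Zero S]
    [FunLike F R S] [ZeroHomClass F R S] {f : F} (hf : Function.Injective f) (x : HahnSeries Γ R) :
    (x.map f).orderTop = x.orderTop := by
  refine eq_of_forall_le_iff fun i => ?_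
  simp only [le_orderTop_iff_forall, map_coeff, map_eq_zero_iff f hf]

namespace LaurentSeries
variable {K : Type*} [Field K]

theorem mem_range_ofPowerSeries_iff {x : K⸨X⸩} :
    x ∈ (ofPowerSeries ℤ K).range ↔ 0 ≤ addVal ℤ K x := by
  rw [addVal_apply]
  constructor
  · rintro ⟨f, rfl⟩
    rw [← WithTop.coe_zero, le_orderTop_iff_forall]
    intro j hj
    rw [PowerSeries.coeff_coe, if_pos (WithTop.coe_lt_coe.mp hj)]
  · intro h
    exact ⟨_, X_order_mul_powerSeriesPart (Int.toNat_of_nonneg (zero_le_orderTop_iff.mp h))⟩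

theorem exists_unit_of_addVal_eq_zero {x : K⸨X⸩} (hx : addVal ℤ K x = 0) :
    ∃ u : (ofPowerSeries ℤ K).rangeˣ, (u : K⸨X⸩) = x := by
  have hx0 : x ≠ 0 := by rintro rfl; simp at hx
  have hmem : x ∈ (ofPowerSeries ℤ K).range := mem_range_ofPowerSeries_iff.mpr hx.ge
  have hinv : x⁻¹ ∈ (ofPowerSeries ℤ K).range := by
    rw [mem_range_ofPowerSeries_iff, AddValuation.map_inv, hx, neg_zero]
  exact ⟨⟨⟨x, hmem⟩, ⟨x⁻¹, hinv⟩, Subtype.ext (mul_inv_cancel₀ hx0),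
    Subtype.ext (inv_mul_cancel₀ hx0)⟩, rfl⟩

theorem exists_mem_range_eq_single_one_mul {x : K⸨X⸩} (hx : 1 ≤ addVal ℤ K x) :
    ∃ y ∈ (ofPowerSeries ℤ K).range, x = single 1 1 * y := by
  refine ⟨single (-1) 1 * x, mem_range_ofPowerSeries_iff.mpr ?_, ?_⟩
  · rw [AddValuation.map_mul, addVal_apply, orderTop_single one_ne_zero]
    generalize addVal ℤ K x = a at hx ⊢
    induction a using WithTop.recTopCoe with
    | top => exact le_top
    | coe a => norm_cast at hx ⊢; lia
  · rw [← mul_assoc, single_mul_single]; simp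

end LaurentSeries

theorem WithTop.cyclic_trichotomy (D P Q : WithTop ℤ) :
    (D + D + D < P + 1 + (P + 1) + P ∧ D + D + D < Q + 1 + Q + Q ∧ D + D + D < D + (P + 1) + Q) ∨
    (P + 1 + (P + 1) + P < D + D + D ∧ P + 1 + (P + 1) + P < Q + 1 + Q + Q ∧
      P + 1 + (P + 1) + P < D + (P + 1) + Q) ∨
    (Q + 1 + Q + Q < D + D + D ∧ Q + 1 + Q + Q < P + 1 + (P + 1) + P ∧
      Q + 1 + Q + Q < D + (P + 1) + Q) ∨
    (D = ⊤ ∧ P = ⊤ ∧ Q = ⊤) := by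
  induction D using WithTop.recTopCoe <;> induction P using WithTop.recTopCoe <;>
    induction Q using WithTop.recTopCoe <;> simp <;> norm_cast <;> omega

theorem WithTop.cyclic_min_eq_zero {D P Q : WithTop ℤ}
    (h : min (D + D + D) (min (P + 1 + (P + 1) + P) (Q + 1 + Q + Q)) = 0) :
    D = 0 ∧ 0 ≤ P ∧ 0 ≤ Q := by
  induction D using WithTop.recTopCoe <;> induction P using WithTop.recTopCoe <;>
    induction Q using WithTop.recTopCoe <;> simp at h ⊢ <;> norm_cast at h ⊢ <;> omega

namespace AddValuation
variable {F : Type*} [Field F] (v : AddValuation F (WithTop ℤ))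

theorem map_add_add_sub_eq_of_lt {x y z r : F} (hy : v x < v y) (hz : v x < v z)
    (hr : v x < v r) : v (x + y + z - r) = v x := by
  have hxy : v (x + y) = v x := map_add_eq_of_lt_left v hy
  have hxyz : v (x + y + z) = v x := by rw [map_add_eq_of_lt_left v (hxy ▸ hz), hxy]
  rw [map_sub_eq_of_lt_left v (hxyz ▸ hr), hxyz]

structure IsSuperbasicPattern (M : Matrix (Fin 3) (Fin 3) F) : Prop where
  val_one_one : v (M 1 1) = v (M 0 0)
  val_two_two : v (M 2 2) = v (M 0 0)
  val_zero_one : v (M 0 1) = v (M 2 0) + 1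
  val_one_two : v (M 1 2) = v (M 2 0) + 1
  val_zero_two : v (M 0 2) = v (M 1 0) + 1
  val_two_one : v (M 2 1) = v (M 1 0)

variable {v}

theorem IsSuperbasicPattern.val_det {M : Matrix (Fin 3) (Fin 3) F} (h : IsSuperbasicPattern v M) :
    v M.det = min (v (M 0 0) + v (M 0 0) + v (M 0 0))
      (min (v (M 2 0) + 1 + (v (M 2 0) + 1) + v (M 2 0))
        (v (M 1 0) + 1 + v (M 1 0) + v (M 1 0))) := by
  obtain ⟨h11, h22, h01, h12, h02, h21⟩ := h
  generalize hD : v (M 0 0) = D at h11 h22 ⊢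
  generalize hP : v (M 2 0) = P at h01 h12 ⊢
  generalize hQ : v (M 1 0) = Q at h02 h21 ⊢
  set x := M 0 0 * M 1 1 * M 2 2
  set y := M 0 1 * M 1 2 * M 2 0
  set z := M 0 2 * M 1 0 * M 2 1
  set r := M 0 0 * M 1 2 * M 2 1 + M 0 1 * M 1 0 * M 2 2 + M 0 2 * M 1 1 * M 2 0
  have hdet : M.det = x + y + z - r := by rw [Matrix.det_fin_three]; ring
  have hx : v x = D + D + D := by simp only [x, map_mul, hD, h11, h22]
  have hy : v y = P + 1 + (P + 1) + P := by simp only [y, map_mul, hP, h01, h12]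
  have hz : v z = Q + 1 + Q + Q := by simp only [z, map_mul, hQ, h02, h21]
  have hr : D + (P + 1) + Q ≤ v r := by
    refine map_le_add _ (map_le_add _ ?_ ?_) ?_ <;>
      simp only [map_mul, hD, hP, hQ, h11, h22, h01, h12, h02, h21] <;> apply le_of_eq <;> abel
  rw [hdet]
  rcases WithTop.cyclic_trichotomy D P Q with
    ⟨hxy, hxz, hxr⟩ | ⟨hyx, hyz, hyr⟩ | ⟨hzx, hzy, hzr⟩ | ⟨rfl, rfl, rfl⟩
  · rw [map_add_add_sub_eq_of_lt v (hx ▸ hy ▸ hxy) (hx ▸ hz ▸ hxz) (hx ▸ hxr.trans_le hr), hx,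
      min_eq_left (le_min hxy.le hxz.le)]
  · rw [show x + y + z - r = y + x + z - r by ring,
      map_add_add_sub_eq_of_lt v (hy ▸ hx ▸ hyx) (hy ▸ hz ▸ hyz) (hy ▸ hyr.trans_le hr), hy,
      min_eq_left hyz.le, min_eq_right hyx.le]
  · rw [show x + y + z - r = z + x + y - r by ring,
      map_add_add_sub_eq_of_lt v (hz ▸ hx ▸ hzx) (hz ▸ hy ▸ hzy) (hz ▸ hzr.trans_le hr), hz,
      min_eq_right hzy.le, min_eq_right hzx.le]
  · simp only [top_add, add_top, min_self] at hx hy hz hr ⊢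
    exact top_unique (map_le_sub _ (map_le_add _ (map_le_add _ hx.ge hy.ge) hz.ge) hr)

theorem IsSuperbasicPattern.val_iwahori {M : Matrix (Fin 3) (Fin 3) F}
    (h : IsSuperbasicPattern v M) (hdet : v M.det = 0) :
    (∀ i, v (M i i) = 0) ∧ (∀ i j, i < j → 1 ≤ v (M i j)) ∧ (∀ i j, j < i → 0 ≤ v (M i j)) := by
  obtain ⟨hD, hP, hQ⟩ := WithTop.cyclic_min_eq_zero (h.val_det ▸ hdet)
  have hP1 : 1 ≤ v (M 2 0) + 1 := le_add_of_nonneg_left hP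
  have hQ1 : 1 ≤ v (M 1 0) + 1 := le_add_of_nonneg_left hQ
  refine ⟨fun i => ?_, fun i j hij => ?_, fun i j hij => ?_⟩
  · fin_cases i
    exacts [hD, h.val_one_one.trans hD, h.val_two_two.trans hD]
  all_goals fin_cases i <;> fin_cases j <;> revert hij <;>
    simp [h.val_zero_one, h.val_one_two, h.val_zero_two, h.val_two_one, hP, hQ, hP1, hQ1]

end AddValuation

section Frobenius

variable {p n : ℕ} [Fact p.Prime]

theorem addVal_sigmaL (x : Lser p n) :
    addVal ℤ (Kbar p n) (sigmaL p n x) = addVal ℤ (Kbar p n) x := by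
  simp only [addVal_apply]
  exact orderTop_map_of_injective (frobKbar p n).injective x

theorem addVal_tUnit_mul (x : Lser p n) :
    addVal ℤ (Kbar p n) ((tUnit p n : Lser p n) * x) = addVal ℤ (Kbar p n) x + 1 := by
  rw [AddValuation.map_mul, add_comm, addVal_apply (x := (tUnit p n : Lser p n)),
    tUnit, Units.val_mk0, orderTop_single one_ne_zero, WithTop.coe_one]

theorem mul_sigmaGL_apply_eq {b g : GL (Fin 3) (Lser p n)} (hg : b * sigmaGL p n g = g * b)
    (i j : Fin 3) :
    ∑ k, (b : Matrix (Fin 3) (Fin 3) (Lser p n)) i k * sigmaL p n (g k j) =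
      ∑ k, (g : Matrix (Fin 3) (Fin 3) (Lser p n)) i k * b k j := by
  have h := congrArg (fun x : GL (Fin 3) (Lser p n) => (x : Matrix (Fin 3) (Fin 3) (Lser p n)) i j)
    hg
  simp only [Units.val_mul, Matrix.mul_apply] at h
  exact h

theorem isSuperbasicPattern_of_bOne {g : GL (Fin 3) (Lser p n)}
    (hg : bOne p n * sigmaGL p n g = g * bOne p n) :
    (addVal ℤ (Kbar p n)).IsSuperbasicPattern (g : Matrix (Fin 3) (Fin 3) (Lser p n)) := by
  have e := mul_sigmaGL_apply_eq hg
  have e00 := e 0 0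
  have e10 := e 1 0
  have e11 := e 1 1
  have e12 := e 1 2
  have e20 := e 2 0
  have e21 := e 2 1
  simp only [bOne, GeneralLinearGroup.val_mkOfDetNeZero, of_apply, cons_val', cons_val_fin_one,
    cons_val_zero, cons_val_one, cons_val, Fin.sum_univ_three, zero_mul, mul_zero, mul_one, one_mul,
    add_zero, zero_add] at e00 e10 e11 e12 e20 e21
  exact ⟨by rw [← e10, addVal_sigmaL], by rw [← e21, addVal_sigmaL, ← e10, addVal_sigmaL],
    by rw [← e00, addVal_tUnit_mul, addVal_sigmaL],
    by rw [← e11, addVal_sigmaL, ← e00, addVal_tUnit_mul, addVal_sigmaL],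
    by rw [← addVal_sigmaL, e12, mul_comm, addVal_tUnit_mul], by rw [← e20, addVal_sigmaL]⟩

theorem isSuperbasicPattern_of_bTwo {g : GL (Fin 3) (Lser p n)}
    (hg : bTwo p n * sigmaGL p n g = g * bTwo p n) :
    (addVal ℤ (Kbar p n)).IsSuperbasicPattern (g : Matrix (Fin 3) (Fin 3) (Lser p n)) := by
  have e := mul_sigmaGL_apply_eq hg
  have e00 := e 0 0
  have e01 := e 0 1
  have e02 := e 0 2
  have e10 := e 1 0
  have e11 := e 1 1
  have e12 := e 1 2
  simp only [bTwo, GeneralLinearGroup.val_mkOfDetNeZero, of_apply, cons_val', cons_val_fin_one,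
    cons_val_zero, cons_val_one, cons_val, Fin.sum_univ_three, zero_mul, mul_zero, mul_one,
    add_zero, zero_add] at e00 e01 e02 e10 e11 e12
  have cancel {x y : Lser p n} (h : (tUnit p n : Lser p n) * x = y * tUnit p n) : x = y :=
    mul_left_cancel₀ (tUnit p n).ne_zero (h.trans (mul_comm _ _))
  exact ⟨by rw [← cancel e01, addVal_sigmaL],
    by rw [← addVal_sigmaL, cancel e12, ← cancel e01, addVal_sigmaL],
    by rw [← cancel e02, addVal_sigmaL, ← e10, addVal_tUnit_mul, addVal_sigmaL],
    by rw [← e10, addVal_tUnit_mul, addVal_sigmaL], by rw [← e00, addVal_tUnit_mul, addVal_sigmaL],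
    by rw [← addVal_sigmaL, cancel e11]⟩

end Frobenius

theorem statement8_general (p n : ℕ) [Fact p.Prime]
    (b : GL (Fin 3) (Lser p n)) (hb : b = bOne p n ∨ b = bTwo p n)
    (g : GL (Fin 3) (Lser p n))
    (hg : g⁻¹ * b * sigmaGL p n g = b)
    (hdet : eta p n g = 0) :
    (∀ i : Fin 3, ∃ u : (Oring p n)ˣ,
        (((u : (Oring p n)ˣ) : Oring p n) : Lser p n)
          = (g : Matrix (Fin 3) (Fin 3) (Lser p n)) i i) ∧
    (∀ i j : Fin 3, i < j →
        ∃ y ∈ Oring p n,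
          (g : Matrix (Fin 3) (Fin 3) (Lser p n)) i j
            = ((tUnit p n : (Lser p n)ˣ) : Lser p n) * y) ∧
    (∀ i j : Fin 3, j < i →
        (g : Matrix (Fin 3) (Fin 3) (Lser p n)) i j ∈ Oring p n) := by
  have hcomm : b * sigmaGL p n g = g * b :=
    inv_mul_eq_iff_eq_mul.mp ((mul_assoc _ _ _).symm.trans hg)
  have hpattern :
      (addVal ℤ (Kbar p n)).IsSuperbasicPattern (g : Matrix (Fin 3) (Fin 3) (Lser p n)) := by
    rcases hb with rfl | rfl
    exacts [isSuperbasicPattern_of_bOne hcomm, isSuperbasicPattern_of_bTwo hcomm]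
  have hval_det : addVal ℤ (Kbar p n) (g : Matrix (Fin 3) (Fin 3) (Lser p n)).det = 0 := by
    rw [addVal_apply_of_ne g.det_ne_zero]
    exact_mod_cast hdet
  obtain ⟨hdiag, hupper, hlower⟩ := hpattern.val_iwahori hval_det
  exact ⟨fun i => LaurentSeries.exists_unit_of_addVal_eq_zero (hdiag i),
    fun i j hij => LaurentSeries.exists_mem_range_eq_single_one_mul (hupper i j hij),
    fun i j hij => LaurentSeries.mem_range_ofPowerSeries_iff.mpr (hlower i j hij)⟩

/-- If `g⁻¹ bᵢ σ(g) = bᵢ` (`i = 1, 2`) and `v_L(det g) = 0`, then `g`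
lies in the standard Iwahori subgroup: the diagonal entries are units of `𝒪`, the
strictly upper-triangular entries lie in `t𝒪`, and the strictly lower-triangular
entries lie in `𝒪`. -/
theorem statement8 (p n : ℕ) [Fact p.Prime] (hn : 0 < n)
    (b : GL (Fin 3) (Lser p n)) (hb : b = bOne p n ∨ b = bTwo p n)
    (g : GL (Fin 3) (Lser p n))
    (hg : g⁻¹ * b * sigmaGL p n g = b)
    (hdet : eta p n g = 0) :
    (∀ i : Fin 3, ∃ u : (Oring p n)ˣ,
        (((u : (Oring p n)ˣ) : Oring p n) : Lser p n)
          = (g : Matrix (Fin 3) (Fin 3) (Lser p n)) i i) ∧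
    (∀ i j : Fin 3, i < j →
        ∃ y ∈ Oring p n,
          (g : Matrix (Fin 3) (Fin 3) (Lser p n)) i j
            = ((tUnit p n : (Lser p n)ˣ) : Lser p n) * y) ∧
    (∀ i j : Fin 3, j < i →
        (g : Matrix (Fin 3) (Fin 3) (Lser p n)) i j ∈ Oring p n) :=
  statement8_general p n b hb g hg hdet
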